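/- Let F : [a, b] → ℂ be continuous with 0 < a < b, and let p ≥ 1. For any subdivision a = t₀ < t₁ < ⋯ < t_m = b with b ≤ 2a, one has Σ_{j=1}^{m} |∫_{t_{j-1}}^{t_j} F(t) dt/t|^p ≤ ∫_{a}^{b} |F(t)|^p dt/t. -/

import Mathlib

open intervalIntegral MeasureTheory Set

/-! Bound `‖∫ F(s) ds/s‖` by `∫ ‖F(s)‖/s ds` and apply Jensen's inequality for `x ↦ x ^ p`
on each piece `[c, d]` of the subdivision, which costs a factor `(d - c) ^ (p - 1)`. Since
`b ≤ 2a`, every piece has length `d - c ≤ c ≤ s` for `s ∈ [c, d]`, so this factor is absorbed by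
`s ^ (p - 1)` and turns `(‖F(s)‖ / s) ^ p` into `‖F(s)‖ ^ p / s`. Summing over the pieces gives
the integral over `[a, b]`. -/

theorem rpow_setIntegral_le_measureReal_rpow_mul {α : Type*} [MeasurableSpace α]
    {μ : Measure α} {s : Set α} (h0 : μ s ≠ 0) (hs : μ s ≠ ⊤) {p : ℝ} (hp : 1 ≤ p)
    {g : α → ℝ} (hg : ∀ᵐ x ∂μ.restrict s, 0 ≤ g x) (hgi : IntegrableOn g s μ)
    (hgpi : IntegrableOn (fun x => g x ^ p) s μ) :
    (∫ x in s, g x ∂μ) ^ p ≤ μ.real s ^ (p - 1) * ∫ x in s, g x ^ p ∂μ := by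
  have hr : 0 < μ.real s := ENNReal.toReal_pos h0 hs
  have hI : 0 ≤ ∫ x in s, g x ∂μ := integral_nonneg_of_ae hg
  have jensen : ((μ.real s)⁻¹ * ∫ x in s, g x ∂μ) ^ p ≤ (μ.real s)⁻¹ * ∫ x in s, g x ^ p ∂μ := by
    simpa only [setAverage_eq, smul_eq_mul] using
      (convexOn_rpow hp).map_set_average_le
        (continuousOn_id.rpow_const fun _ _ => Or.inr (by linarith)) isClosed_Ici h0 hs hg hgi hgpi
  calc (∫ x in s, g x ∂μ) ^ p
      = μ.real s ^ p * ((μ.real s)⁻¹ * ∫ x in s, g x ∂μ) ^ p := by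
        rw [Real.mul_rpow (inv_nonneg.2 hr.le) hI, Real.inv_rpow hr.le, ← mul_assoc,
          mul_inv_cancel₀ (Real.rpow_pos_of_pos hr p).ne', one_mul]
    _ ≤ μ.real s ^ p * ((μ.real s)⁻¹ * ∫ x in s, g x ^ p ∂μ) := by gcongr
    _ = μ.real s ^ (p - 1) * ∫ x in s, g x ^ p ∂μ := by
        rw [Real.rpow_sub_one hr.ne', div_eq_mul_inv, mul_assoc]

theorem rpow_intervalIntegral_le_sub_rpow_mul {c d p : ℝ} (hcd : c < d) (hp : 1 ≤ p) {g : ℝ → ℝ}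
    (hg : ∀ x ∈ Ioc c d, 0 ≤ g x) (hgi : IntervalIntegrable g volume c d)
    (hgpi : IntervalIntegrable (fun x => g x ^ p) volume c d) :
    (∫ x in c..d, g x) ^ p ≤ (d - c) ^ (p - 1) * ∫ x in c..d, g x ^ p := by
  have hvol : volume.real (Ioc c d) = d - c := by simp [hcd.le]
  rw [integral_of_le hcd.le, integral_of_le hcd.le, ← hvol]
  exact rpow_setIntegral_le_measureReal_rpow_mul (by simp [hcd]) (by simp) hp
    ((ae_restrict_iff' measurableSet_Ioc).2 (.of_forall hg))
    ((intervalIntegrable_iff_integrableOn_Ioc_of_le hcd.le).1 hgi)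
    ((intervalIntegrable_iff_integrableOn_Ioc_of_le hcd.le).1 hgpi)

theorem rpow_sub_one_mul_div_rpow_le {L s x p : ℝ} (hL : 0 ≤ L) (hLs : L ≤ s) (hs : 0 < s)
    (hx : 0 ≤ x) (hp : 1 ≤ p) : L ^ (p - 1) * (x / s) ^ p ≤ x ^ p / s := by
  calc L ^ (p - 1) * (x / s) ^ p ≤ s ^ (p - 1) * (x / s) ^ p := by gcongr
    _ = x ^ p / s := by
        rw [Real.div_rpow hx hs.le, Real.rpow_sub_one hs.ne']
        field_simp

theorem norm_integral_div_rpow_le {c d p : ℝ} (hc : 0 < c) (hcd : c < d) (hd : d ≤ 2 * c)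
    (hp : 1 ≤ p) {F : ℝ → ℂ} (hF : ContinuousOn F (Icc c d)) :
    ‖∫ s in c..d, F s / (s : ℂ)‖ ^ p ≤ ∫ s in c..d, ‖F s‖ ^ p / s := by
  have hp0 : 0 ≤ p := by linarith
  have hne : ∀ s ∈ Icc c d, s ≠ 0 := fun s hs => (hc.trans_le hs.1).ne'
  have hg : ContinuousOn (fun s => ‖F s‖ / s) (Icc c d) := hF.norm.div continuousOn_id hne
  have hgp : ContinuousOn (fun s => (‖F s‖ / s) ^ p) (Icc c d) :=
    hg.rpow_const fun _ _ => Or.inr hp0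
  have htarget : ContinuousOn (fun s => ‖F s‖ ^ p / s) (Icc c d) :=
    (hF.norm.rpow_const fun _ _ => Or.inr hp0).div continuousOn_id hne
  have hnorm : ‖∫ s in c..d, F s / (s : ℂ)‖ ≤ ∫ s in c..d, ‖F s‖ / s := by
    refine (intervalIntegral.norm_integral_le_integral_norm hcd.le).trans_eq
      (integral_congr fun s hs => ?_)
    rw [uIcc_of_le hcd.le] at hs
    simp only [norm_div, Complex.norm_real, Real.norm_of_nonneg (hc.trans_le hs.1).le]
  calc ‖∫ s in c..d, F s / (s : ℂ)‖ ^ p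
      ≤ (∫ s in c..d, ‖F s‖ / s) ^ p := by gcongr
    _ ≤ (d - c) ^ (p - 1) * ∫ s in c..d, (‖F s‖ / s) ^ p :=
        rpow_intervalIntegral_le_sub_rpow_mul hcd hp
          (fun s hs => div_nonneg (norm_nonneg _) (hc.trans hs.1).le)
          (hg.intervalIntegrable_of_Icc hcd.le) (hgp.intervalIntegrable_of_Icc hcd.le)
    _ = ∫ s in c..d, (d - c) ^ (p - 1) * (‖F s‖ / s) ^ p :=
        (intervalIntegral.integral_const_mul _ _).symm
    _ ≤ ∫ s in c..d, ‖F s‖ ^ p / s := by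
        refine integral_mono_on hcd.le ((hgp.intervalIntegrable_of_Icc hcd.le).const_mul _)
          (htarget.intervalIntegrable_of_Icc hcd.le) fun s hs => ?_
        exact rpow_sub_one_mul_div_rpow_le (by linarith) (by linarith [hs.1])
          (hc.trans_le hs.1) (norm_nonneg _) hp

theorem short_variation_pointwise_bound_general (a b : ℝ) (ha : 0 < a)
    (hb2 : b ≤ 2 * a) (p : ℝ) (hp : 1 ≤ p) (F : ℝ → ℂ)
    (hF : ContinuousOn F (Set.Icc a b))
    (m : ℕ) (t : ℕ → ℝ) (ht0 : t 0 = a) (htm : t m = b)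
    (hmono : ∀ i j, i < j → j ≤ m → t i < t j) :
    ∑ j ∈ Finset.range m, ‖∫ s in t j..t (j+1), F s / (s:ℂ)‖ ^ p
      ≤ ∫ s in a..b, ‖F s‖ ^ p / s := by
  have hstep : ∀ j < m, t j < t (j + 1) := fun j hj => hmono j (j + 1) j.lt_succ_self hj
  have hpiece : ∀ j < m, a ≤ t j ∧ t (j + 1) ≤ b := fun j hj => by
    constructor
    · rcases j.eq_zero_or_pos with rfl | hj0
      exacts [ht0.ge, ht0 ▸ (hmono 0 j hj0 hj.le).le]
    · rcases (Nat.succ_le_of_lt hj).lt_or_eq with hjm | hjm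
      exacts [htm ▸ (hmono (j + 1) m hjm le_rfl).le, ((congrArg t hjm).trans htm).le]
  have hsub : ∀ j < m, Icc (t j) (t (j + 1)) ⊆ Icc a b := fun j hj =>
    Icc_subset_Icc (hpiece j hj).1 (hpiece j hj).2
  have htarget : ContinuousOn (fun s => ‖F s‖ ^ p / s) (Icc a b) :=
    (hF.norm.rpow_const fun _ _ => Or.inr (by linarith)).div continuousOn_id
      fun s hs => (ha.trans_le hs.1).ne'
  calc ∑ j ∈ Finset.range m, ‖∫ s in t j..t (j+1), F s / (s:ℂ)‖ ^ p
      ≤ ∑ j ∈ Finset.range m, ∫ s in t j..t (j+1), ‖F s‖ ^ p / s :=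
        Finset.sum_le_sum fun j hj => by
          have hj := Finset.mem_range.1 hj
          exact norm_integral_div_rpow_le (ha.trans_le (hpiece j hj).1) (hstep j hj)
            (by linarith [hpiece j hj]) hp (hF.mono (hsub j hj))
    _ = ∫ s in t 0..t m, ‖F s‖ ^ p / s :=
        sum_integral_adjacent_intervals fun j hj =>
          (htarget.mono (hsub j hj)).intervalIntegrable_of_Icc (hstep j hj).le
    _ = ∫ s in a..b, ‖F s‖ ^ p / s := by rw [ht0, htm]

/-- Pointwise short-variation bound: for a continuous `F` on `[a,b]` with `b ≤ 2a` and
any subdivision `a = t₀ < ⋯ < t_m = b`, the `ℓ^p` sum of the increments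
`∫_{t_{j-1}}^{t_j} F(t) dt/t` is bounded by `∫_a^b |F(t)|^p dt/t`. -/
theorem short_variation_pointwise_bound (a b : ℝ) (ha : 0 < a) (hab : a < b)
    (hb2 : b ≤ 2 * a) (p : ℝ) (hp : 1 ≤ p) (F : ℝ → ℂ)
    (hF : ContinuousOn F (Set.Icc a b))
    (m : ℕ) (hm : 0 < m) (t : ℕ → ℝ) (ht0 : t 0 = a) (htm : t m = b)
    (hmono : ∀ i j, i < j → j ≤ m → t i < t j) :
    ∑ j ∈ Finset.range m, ‖∫ s in t j..t (j+1), F s / (s:ℂ)‖ ^ p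
      ≤ ∫ s in a..b, ‖F s‖ ^ p / s :=
  short_variation_pointwise_bound_general a b ha hb2 p hp F hF m t ht0 htm hmono
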